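/- Let (A,≺,≻,α) be a Hom-Leibniz dendriform algebra over a field K and let (A,[·,·],α) with [x,y] = x≺y + x≻y be the associated Hom-Leibniz algebra. If (l,r,β,V) is any bimodule of the Hom-Leibniz algebra (A,[·,·],α), then the tuple (l≺, r≺, l≻, r≻, β, V) with l≺ = 0, r≺ = r, l≻ = l and r≻ = 0 is a bimodule of the Hom-Leibniz dendriform algebra (A,≺,≻,α). -/
import Mathlib


/-- A Hom-Leibniz algebra structure. -/
def HomLeibniz {K A : Type*} [Field K] [AddCommGroup A] [Module K A]
    (br : A →ₗ[K] A →ₗ[K] A) (α : A →ₗ[K] A) : Prop :=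
  ∀ x y z : A, br (α x) (br y z) = br (br x y) (α z) + br (α y) (br x z)

/-- A bimodule `(l, r, β, V)` of a Hom-Leibniz algebra `(A, br, α)`. -/
def HomLeibnizBimodule {K A V : Type*} [Field K] [AddCommGroup A] [Module K A]
    [AddCommGroup V] [Module K V]
    (br : A →ₗ[K] A →ₗ[K] A) (α : A →ₗ[K] A)
    (l r : A →ₗ[K] V →ₗ[K] V) (β : V →ₗ[K] V) : Prop :=
  (∀ x y v, l (α x) (l y v) = l (br x y) (β v) + l (α y) (l x v)) ∧
  (∀ x y v, l (α x) (r y v) = r (α y) (l x v) + r (br x y) (β v)) ∧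
  (∀ x y v, r (br x y) (β v) = r (α y) (r x v) + l (α x) (r y v)) ∧
  (∀ x v, β (l x v) = l (α x) (β v)) ∧
  (∀ x v, β (r x v) = r (α x) (β v))

/-- A Hom-Leibniz dendriform algebra `(A, ≺, ≻, α)`, with `p = ≺` and `s = ≻`
and `[x,y] = x≺y + x≻y`. -/
def HomLeibnizDendriform {K A : Type*} [Field K] [AddCommGroup A] [Module K A]
    (p s : A →ₗ[K] A →ₗ[K] A) (α : A →ₗ[K] A) : Prop :=
  (∀ x y z : A, s (p x y + s x y) (α z) = s (α x) (s y z) - s (α y) (s x z)) ∧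
  (∀ x y z : A, s (α x) (p y z) = p (s x y) (α z) + p (α y) (p x z + s x z)) ∧
  (∀ x y z : A, p (α x) (p y z + s y z) = p (p x y) (α z) + s (α y) (p x z))

/-- A bimodule `(l≺, r≺, l≻, r≻, β, V)` of a Hom-Leibniz dendriform algebra
`(A, ≺, ≻, α)` (here `p = ≺`, `s = ≻`, `lp = l≺`, `rp = r≺`, `ls = l≻`,
`rs = r≻`). -/
def HomLeibnizDendriformBimodule {K A V : Type*} [Field K]
    [AddCommGroup A] [Module K A] [AddCommGroup V] [Module K V]
    (p s : A →ₗ[K] A →ₗ[K] A) (α : A →ₗ[K] A)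
    (lp rp ls rs : A →ₗ[K] V →ₗ[K] V) (β : V →ₗ[K] V) : Prop :=
  (∀ x y v, ls (p x y + s x y) (β v) = ls (α x) (ls y v) - ls (α y) (ls x v)) ∧
  (∀ x y v, rs (α y) (lp x v + ls x v) = ls (α x) (rs y v) - rs (s x y) (β v)) ∧
  (∀ x y v, rs (α y) (rp x v + rs x v) = rs (s x y) (β v) - ls (α x) (rs y v)) ∧
  (∀ x y v, ls (α x) (lp y v) = lp (s x y) (β v) + lp (α y) (lp x v + ls x v)) ∧
  (∀ x y v, ls (α x) (rp y v) = rp (α y) (ls x v) + rp (p x y + s x y) (β v)) ∧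
  (∀ x y v, rs (p x y) (β v) = rp (α y) (rs x v) + lp (α x) (rp y v + rs y v)) ∧
  (∀ x y v, lp (α x) (lp y v + ls y v) = lp (p x y) (β v) + ls (α y) (lp x v)) ∧
  (∀ x y v, lp (α x) (rp y v + rs y v) = rp (α y) (lp x v) + rs (p x y) (β v)) ∧
  (∀ x y v, rp (p x y + s x y) (β v) = rp (α y) (rp x v) + ls (α x) (rp y v)) ∧
  (∀ x v, β (lp x v) = lp (α x) (β v)) ∧
  (∀ x v, β (rp x v) = rp (α x) (β v)) ∧
  (∀ x v, β (ls x v) = ls (α x) (β v)) ∧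
  (∀ x v, β (rs x v) = rs (α x) (β v))

/-- if `(l, r, β, V)` is a bimodule of the Hom-Leibniz algebra
associated to a Hom-Leibniz dendriform algebra `(A, ≺, ≻, α)`, then
`(l≺, r≺, l≻, r≻) = (0, r, l, 0)` gives a bimodule of `(A, ≺, ≻, α)`. -/
theorem dendriform_bimodule_of_homLeibniz_bimodule
    {K A V : Type*} [Field K] [AddCommGroup A] [Module K A]
    [AddCommGroup V] [Module K V]
    (p s : A →ₗ[K] A →ₗ[K] A) (α : A →ₗ[K] A)
    (l r : A →ₗ[K] V →ₗ[K] V) (β : V →ₗ[K] V)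
    (hA : HomLeibnizDendriform p s α)
    (hV : HomLeibnizBimodule (p + s) α l r β) :
    HomLeibnizDendriformBimodule p s α 0 r l 0 β := by
  obtain ⟨h1, h2, h3, h4, h5⟩ := hV
  simp only [LinearMap.add_apply] at h1 h2 h3
  refine ⟨fun x y v => ?_, fun x y v => ?_, fun x y v => ?_, fun x y v => ?_,
    fun x y v => ?_, fun x y v => ?_, fun x y v => ?_, fun x y v => ?_,
    fun x y v => ?_, fun x v => ?_, fun x v => ?_, fun x v => ?_, fun x v => ?_⟩ <;>
    (try simp only [LinearMap.zero_apply, Pi.zero_apply, map_zero, zero_add, add_zero,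
      sub_zero, zero_sub, neg_zero])
  · rw [eq_sub_iff_add_eq]; exact (h1 x y v).symm
  · exact h2 x y v
  · exact h3 x y v
  · exact h5 x v
  · exact h4 x v
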